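/- Let ω ≥ 1, p = 2ω − 1, and let (a_n) be a nonnegative real sequence with a_n → 0 such that for all n ≥ n₀: a_{n+p} ≤ a_n (Z(p)-monotone decrease) and 2·a_{n+p} ≤ a_n + a_{n+2p} (convexity along each arithmetic progression of step p). Let S = ∑_{n=n₀}^∞ (−1)^n a_n. Then for every m ≥ n₀: (−1)^{m+1}(S − S_m) ≤ ∑_{r=1}^{ω} a_{m+2r−1} − (1/2)·∑_{r=1}^{ω−1} a_{m+2r}, where S_m = ∑_{n=n₀}^m (−1)^n a_n. -/

import Mathlib

/-!
Since `p = 2ω - 1` is odd, `(-1)^(j + k p) = (-1)^j (-1)^k`, so the tail of the series after `m`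
splits into the `p` alternating series `δ_j = ∑_k (-1)^k a_{m+1+j+kp}`, `j < p`, and
`(-1)^(m+1) (S - S_m) = ∑_j (-1)^j δ_j`. Each `δ_j` has antitone, convex terms tending to `0`, so
`a_{m+1+j} / 2 ≤ δ_j ≤ a_{m+1+j}`: the upper bound is Leibniz's, and for the lower one convexity
of the terms `b_i` gives `2 (b_{2i} - b_{2i+1}) ≥ b_{2i} - b_{2i+2}`, which telescopes. Bounding
the terms with even `j` from above and those with odd `j` from below gives the estimate.
-/

open Filter Finset Topology

lemma le_two_mul_sum_range_alternating_of_convex {b : ℕ → ℝ}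
    (hconv : ∀ i, 2 * b (i + 1) ≤ b i + b (i + 2)) (K : ℕ) :
    b 0 - b (2 * K) ≤ 2 * ∑ i ∈ range (2 * K), (-1) ^ i * b i := by
  induction K with
  | zero => simp
  | succ K ih =>
    rw [show 2 * (K + 1) = 2 * K + 1 + 1 by ring, sum_range_succ, sum_range_succ, pow_succ,
      (even_two_mul K).neg_one_pow]
    linarith [hconv (2 * K)]

lemma half_le_of_tendsto_alternating_of_convex {b : ℕ → ℝ} {l : ℝ}
    (hconv : ∀ i, 2 * b (i + 1) ≤ b i + b (i + 2)) (hb : Tendsto b atTop (𝓝 0))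
    (hl : Tendsto (fun n ↦ ∑ i ∈ range n, (-1) ^ i * b i) atTop (𝓝 l)) :
    b 0 / 2 ≤ l := by
  have htwo : Tendsto (fun K : ℕ ↦ 2 * K) atTop atTop := tendsto_id.const_mul_atTop' two_pos
  have := le_of_tendsto_of_tendsto' (tendsto_const_nhds.sub (hb.comp htwo))
    ((hl.comp htwo).const_mul 2) (le_two_mul_sum_range_alternating_of_convex hconv)
  linarith

lemma sum_range_mul_eq_sum_sum {M : Type*} [AddCommMonoid M] (g : ℕ → M) (p K : ℕ) :
    ∑ t ∈ range (K * p), g t = ∑ j ∈ range p, ∑ k ∈ range K, g (j + k * p) := by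
  induction K with
  | zero => simp
  | succ K ih =>
    rw [add_one_mul, sum_range_add, ih, ← sum_add_distrib]
    exact sum_congr rfl fun j _ ↦ by rw [sum_range_succ, add_comm (K * p)]

lemma sum_range_mul_alternating_of_odd {R : Type*} [CommRing R] (g : ℕ → R) {p : ℕ} (hp : Odd p)
    (K : ℕ) :
    ∑ t ∈ range (K * p), (-1) ^ t * g t =
      ∑ j ∈ range p, (-1) ^ j * ∑ k ∈ range K, (-1) ^ k * g (j + k * p) := by
  rw [sum_range_mul_eq_sum_sum]
  refine sum_congr rfl fun j _ ↦ ?_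
  rw [mul_sum]
  refine sum_congr rfl fun k _ ↦ ?_
  rw [pow_add, pow_mul', hp.neg_one_pow]
  ring

lemma sum_Icc_add_eq_add_sum_range {M : Type*} [AddCommMonoid M] (f : ℕ → M) {n₀ m : ℕ}
    (hm : n₀ ≤ m) (N : ℕ) :
    ∑ n ∈ Icc n₀ (m + N), f n = ∑ n ∈ Icc n₀ m, f n + ∑ t ∈ range N, f (m + 1 + t) := by
  induction N with
  | zero => simp
  | succ N ih =>
    rw [← add_assoc, sum_Icc_succ_top (by omega), ih, sum_range_succ, add_assoc, add_right_comm m]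

lemma sum_Icc_one_eq_sum_range {M : Type*} [AddCommMonoid M] (f : ℕ → M) (n : ℕ) :
    ∑ r ∈ Icc 1 n, f r = ∑ r ∈ range n, f (r + 1) := by
  rw [range_eq_Ico, sum_Ico_add', zero_add, Ico_add_one_right_eq_Icc]

lemma tendsto_add_mul_atTop (n : ℕ) {p : ℕ} (hp : 0 < p) :
    Tendsto (fun k ↦ n + k * p) atTop atTop :=
  tendsto_atTop_mono (fun k ↦ (Nat.le_mul_of_pos_right k hp).trans (Nat.le_add_left _ _))
    tendsto_id

lemma neg_one_pow_mul_tail_eq_sum_of_odd {a : ℕ → ℝ} {n₀ m p : ℕ} (hp : Odd p) (hm : n₀ ≤ m)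
    {S : ℝ} (hS : Tendsto (fun N ↦ ∑ n ∈ Icc n₀ N, (-1) ^ n * a n) atTop (𝓝 S)) {δ : ℕ → ℝ}
    (hδ : ∀ j, Tendsto (fun K ↦ ∑ k ∈ range K, (-1) ^ k * a (m + 1 + j + k * p)) atTop (𝓝 (δ j))) :
    (-1) ^ (m + 1) * (S - ∑ n ∈ Icc n₀ m, (-1) ^ n * a n) = ∑ j ∈ range p, (-1) ^ j * δ j := by
  refine tendsto_nhds_unique
    (((hS.comp (tendsto_add_mul_atTop m hp.pos)).sub_const _).const_mul _) ?_
  refine (tendsto_finsetSum _ fun j _ ↦ (hδ j).const_mul ((-1) ^ j)).congr fun K ↦ ?_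
  have hsign : ∀ t, (-1 : ℝ) ^ (m + 1 + t) * a (m + 1 + t) =
      (-1) ^ (m + 1) * ((-1) ^ t * a (m + 1 + t)) := fun t ↦ by ring
  simp only [Function.comp_apply, sum_Icc_add_eq_add_sum_range _ hm, add_sub_cancel_left, hsign,
    ← mul_sum, sum_range_mul_alternating_of_odd _ hp, add_assoc (m + 1)]
  rw [← mul_assoc, ← pow_add, Even.neg_one_pow ⟨_, rfl⟩, one_mul]

section Progression

variable {a : ℕ → ℝ} {n₀ p n : ℕ}

lemma antitone_comp_progression (hZ : ∀ n, n₀ ≤ n → a (n + p) ≤ a n) (hn : n₀ ≤ n) :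
    Antitone fun k ↦ a (n + k * p) :=
  antitone_nat_of_succ_le fun k ↦ by
    simpa [add_mul, add_assoc] using hZ (n + k * p) (by omega)

lemma convex_comp_progression (hconv : ∀ n, n₀ ≤ n → 2 * a (n + p) ≤ a n + a (n + 2 * p))
    (hn : n₀ ≤ n) (k : ℕ) :
    2 * a (n + (k + 1) * p) ≤ a (n + k * p) + a (n + (k + 2) * p) := by
  simpa [add_mul, add_assoc, two_mul] using hconv (n + k * p) (by omega)

lemma tendsto_comp_progression (ha : Tendsto a atTop (𝓝 0)) (hp : 0 < p) (n : ℕ) :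
    Tendsto (fun k ↦ a (n + k * p)) atTop (𝓝 0) :=
  ha.comp (tendsto_add_mul_atTop n hp)

end Progression

lemma sum_range_two_mul_add_one_alternating_le {d v : ℕ → ℝ} (hle : ∀ j, d j ≤ v j)
    (hge : ∀ j, v j / 2 ≤ d j) (t : ℕ) :
    ∑ j ∈ range (2 * t + 1), (-1) ^ j * d j ≤
      ∑ r ∈ range (t + 1), v (2 * r) - 1 / 2 * ∑ r ∈ range t, v (2 * r + 1) := by
  induction t with
  | zero => simpa using hle 0
  | succ t ih =>
    rw [show 2 * (t + 1) + 1 = 2 * t + 1 + 1 + 1 by ring, sum_range_succ, sum_range_succ,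
      sum_range_succ (fun r ↦ v (2 * r)) (t + 1), sum_range_succ (fun r ↦ v (2 * r + 1)) t,
      pow_succ _ (2 * t + 1), (odd_two_mul_add_one t).neg_one_pow, mul_add_one 2 t]
    linarith [hle (2 * t + 2), hge (2 * t + 1)]

theorem Z_series_remainder_improved_bound_general
    (ω n₀ : ℕ) (hω : 1 ≤ ω) (a : ℕ → ℝ)
    (hlim : Tendsto a atTop (nhds 0))
    (hZ : ∀ n : ℕ, n₀ ≤ n → a (n + (2 * ω - 1)) ≤ a n)
    (hconvex : ∀ n : ℕ, n₀ ≤ n →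
      2 * a (n + (2 * ω - 1)) ≤ a n + a (n + 2 * (2 * ω - 1)))
    (S : ℝ)
    (hS : Tendsto (fun m => ∑ n ∈ Finset.Icc n₀ m, (-1 : ℝ) ^ n * a n)
      atTop (nhds S)) :
    ∀ m : ℕ, n₀ ≤ m →
      (-1 : ℝ) ^ (m + 1) * (S - ∑ n ∈ Finset.Icc n₀ m, (-1 : ℝ) ^ n * a n) ≤
        ∑ r ∈ Finset.Icc 1 ω, a (m + 2 * r - 1) -
          (1 / 2) * ∑ r ∈ Finset.Icc 1 (ω - 1), a (m + 2 * r) := by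
  intro m hm
  have hp : Odd (2 * ω - 1) := ⟨ω - 1, by omega⟩
  have hstart (j : ℕ) : n₀ ≤ m + 1 + j := by omega
  have hanti (j : ℕ) := antitone_comp_progression hZ (hstart j)
  have hzero (j : ℕ) := tendsto_comp_progression hlim hp.pos (m + 1 + j)
  choose δ hδ using fun j ↦ (hanti j).tendsto_alternating_series_of_tendsto_zero (hzero j)
  have hle (j : ℕ) : δ j ≤ a (m + 1 + j) := by
    simpa using (hanti j).tendsto_le_alternating_series (hδ j) 0
  have hge (j : ℕ) : a (m + 1 + j) / 2 ≤ δ j := by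
    simpa using half_le_of_tendsto_alternating_of_convex
      (convex_comp_progression hconvex (hstart j)) (hzero j) (hδ j)
  rw [neg_one_pow_mul_tail_eq_sum_of_odd hp hm hS hδ, show 2 * ω - 1 = 2 * (ω - 1) + 1 by omega]
  refine (sum_range_two_mul_add_one_alternating_le hle hge (ω - 1)).trans_eq ?_
  rw [sum_Icc_one_eq_sum_range, sum_Icc_one_eq_sum_range, Nat.sub_add_cancel hω]
  have hodd (r : ℕ) : m + 1 + 2 * r = m + 2 * (r + 1) - 1 := by omega
  have heven (r : ℕ) : m + 1 + (2 * r + 1) = m + 2 * (r + 1) := by omega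
  simp only [hodd, heven]

/-- Improved one-sided remainder estimate for a `Z(p)`-series, `p = 2ω - 1`,
under convexity along each arithmetic progression of step `p`:
`(-1)^{m+1}·(S - S_m) ≤ ∑_{r=1}^{ω} a_{m+2r-1} - (1/2)·∑_{r=1}^{ω-1} a_{m+2r}`. -/
theorem Z_series_remainder_improved_bound
    (ω n₀ : ℕ) (hω : 1 ≤ ω) (a : ℕ → ℝ)
    (hpos : ∀ n : ℕ, 0 ≤ a n)
    (hlim : Tendsto a atTop (nhds 0))
    (hZ : ∀ n : ℕ, n₀ ≤ n → a (n + (2 * ω - 1)) ≤ a n)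
    (hconvex : ∀ n : ℕ, n₀ ≤ n →
      2 * a (n + (2 * ω - 1)) ≤ a n + a (n + 2 * (2 * ω - 1)))
    (S : ℝ)
    (hS : Tendsto (fun m => ∑ n ∈ Finset.Icc n₀ m, (-1 : ℝ) ^ n * a n)
      atTop (nhds S)) :
    ∀ m : ℕ, n₀ ≤ m →
      (-1 : ℝ) ^ (m + 1) * (S - ∑ n ∈ Finset.Icc n₀ m, (-1 : ℝ) ^ n * a n) ≤
        ∑ r ∈ Finset.Icc 1 ω, a (m + 2 * r - 1) -
          (1 / 2) * ∑ r ∈ Finset.Icc 1 (ω - 1), a (m + 2 * r) :=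
  Z_series_remainder_improved_bound_general ω n₀ hω a hlim hZ hconvex S hS
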